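/- arXiv:1607.03833 — 2 statements merged into one kernel-verified Lean document; each statement's English description precedes it below -/
import Mathlib

section
/- Among all nonnegative integrable radial functions ρ on ℝ² with ∫ρ = 1, the functional E[ρ] = ∫_{ℝ²}(|x|^s + ρ(x))ρ(x) dx, s ≥ 2, is uniquely minimized by ρ^{TF}(x) = (1/2)[λ^{TF} − |x|^s]_+, where λ^{TF} > 0 is the unique constant making ∫ ρ^{TF} = 1. -/
/-!
With `a = |x|^s`, the energy density `e(r) = (a + r) r` is quadratic in `r` with `e'' = 2`, and
`ρ^{TF}` satisfies its Euler–Lagrange condition with multiplier `λ`. Hence pointwise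
`(ρ - ρ^{TF})² ≤ e(ρ) - e(ρ^{TF}) - λ (ρ - ρ^{TF})`; integrating, the `λ`-term drops out because
both densities have unit mass, so `E[ρ] - E[ρ^{TF}] ≥ 0`, with equality only if `ρ = ρ^{TF}` a.e.
Uniqueness of `λ` holds because the mass of `ρ^{TF}` is strictly increasing in `λ`.
-/

open MeasureTheory Metric

noncomputable section

variable {α : Type*}

def thomasFermiDensity (V : α → ℝ) (lam : ℝ) (x : α) : ℝ := (1 / 2) * max (lam - V x) 0

-- On `{ρ^{TF} > 0}` the slope `a + 2 ρ^{TF}` of the energy density equals `λ`; elsewhere it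
-- is `a ≥ λ` and only `r ≥ 0` has to be compared.
lemma sq_sub_thomasFermiDensity_le (V : α → ℝ) (lam : ℝ) (x : α) {r : ℝ} (hr : 0 ≤ r) :
    (r - thomasFermiDensity V lam x) ^ 2 ≤
      (V x + r) * r - (V x + thomasFermiDensity V lam x) * thomasFermiDensity V lam x
        - lam * (r - thomasFermiDensity V lam x) := by
  unfold thomasFermiDensity
  rcases le_total lam (V x) with h | h
  · rw [max_eq_right (by linarith)]; nlinarith
  · rw [max_eq_left (by linarith)]; nlinarith

lemma thomasFermiDensity_le_of_le (V : α → ℝ) {l₁ l₂ : ℝ} (h : l₁ ≤ l₂) (x : α) :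
    thomasFermiDensity V l₁ x ≤ thomasFermiDensity V l₂ x := by
  unfold thomasFermiDensity
  gcongr

lemma thomasFermiDensity_lt_of_lt (V : α → ℝ) {l₁ l₂ : ℝ} (h : l₁ < l₂) {x : α}
    (hx : V x < l₂) : thomasFermiDensity V l₁ x < thomasFermiDensity V l₂ x := by
  unfold thomasFermiDensity
  rw [max_eq_left (by linarith : 0 ≤ l₂ - V x)]
  have : max (l₁ - V x) 0 < l₂ - V x := max_lt (by linarith) (by linarith)
  linarith

lemma continuous_thomasFermiDensity [TopologicalSpace α] {V : α → ℝ} (hV : Continuous V)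
    (lam : ℝ) : Continuous (thomasFermiDensity V lam) :=
  continuous_const.mul ((continuous_const.sub hV).max continuous_const)

section Energy

variable [MeasurableSpace α] {μ : Measure α} {V ρ : α → ℝ} {lam : ℝ}

lemma energy_sub_energy_thomasFermiDensity (hρ : Integrable ρ μ)
    (hEρ : Integrable (fun x => (V x + ρ x) * ρ x) μ)
    (hg : Integrable (thomasFermiDensity V lam) μ)
    (hEg : Integrable (fun x => (V x + thomasFermiDensity V lam x) * thomasFermiDensity V lam x) μ)
    (hmass : ∫ x, ρ x ∂μ = ∫ x, thomasFermiDensity V lam x ∂μ) :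
    (∫ x, (V x + ρ x) * ρ x ∂μ) -
        ∫ x, (V x + thomasFermiDensity V lam x) * thomasFermiDensity V lam x ∂μ =
      ∫ x, ((V x + ρ x) * ρ x -
        (V x + thomasFermiDensity V lam x) * thomasFermiDensity V lam x -
          lam * (ρ x - thomasFermiDensity V lam x)) ∂μ := by
  set g := thomasFermiDensity V lam
  have hEdiff : Integrable (fun x => (V x + ρ x) * ρ x - (V x + g x) * g x) μ := hEρ.sub hEg
  have hmult : Integrable (fun x => lam * (ρ x - g x)) μ := (hρ.sub hg).const_mul lam
  rw [integral_sub hEdiff hmult, integral_sub hEρ hEg, integral_const_mul, integral_sub hρ hg,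
    hmass, sub_self, mul_zero, sub_zero]

lemma energy_thomasFermiDensity_le (hρ : Integrable ρ μ) (hρ0 : ∀ x, 0 ≤ ρ x)
    (hEρ : Integrable (fun x => (V x + ρ x) * ρ x) μ)
    (hg : Integrable (thomasFermiDensity V lam) μ)
    (hEg : Integrable (fun x => (V x + thomasFermiDensity V lam x) * thomasFermiDensity V lam x) μ)
    (hmass : ∫ x, ρ x ∂μ = ∫ x, thomasFermiDensity V lam x ∂μ) :
    ∫ x, (V x + thomasFermiDensity V lam x) * thomasFermiDensity V lam x ∂μ ≤
      ∫ x, (V x + ρ x) * ρ x ∂μ := by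
  have hdefect := energy_sub_energy_thomasFermiDensity hρ hEρ hg hEg hmass
  have hdefect_nonneg : 0 ≤ ∫ x, ((V x + ρ x) * ρ x -
      (V x + thomasFermiDensity V lam x) * thomasFermiDensity V lam x -
        lam * (ρ x - thomasFermiDensity V lam x)) ∂μ :=
    integral_nonneg fun x => (sq_nonneg _).trans (sq_sub_thomasFermiDensity_le V lam x (hρ0 x))
  linarith

lemma ae_eq_thomasFermiDensity_of_energy_eq (hρ : Integrable ρ μ) (hρ0 : ∀ x, 0 ≤ ρ x)
    (hEρ : Integrable (fun x => (V x + ρ x) * ρ x) μ)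
    (hg : Integrable (thomasFermiDensity V lam) μ)
    (hEg : Integrable (fun x => (V x + thomasFermiDensity V lam x) * thomasFermiDensity V lam x) μ)
    (hmass : ∫ x, ρ x ∂μ = ∫ x, thomasFermiDensity V lam x ∂μ)
    (heq : ∫ x, (V x + ρ x) * ρ x ∂μ =
      ∫ x, (V x + thomasFermiDensity V lam x) * thomasFermiDensity V lam x ∂μ) :
    ρ =ᵐ[μ] thomasFermiDensity V lam := by
  set g := thomasFermiDensity V lam
  set defect := fun x => (V x + ρ x) * ρ x - (V x + g x) * g x - lam * (ρ x - g x)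
  have hbound (x : α) : (ρ x - g x) ^ 2 ≤ defect x :=
    sq_sub_thomasFermiDensity_le V lam x (hρ0 x)
  have hdefect_zero : defect =ᵐ[μ] 0 := by
    refine (integral_eq_zero_iff_of_nonneg (fun x => (sq_nonneg _).trans (hbound x))
      ((hEρ.sub hEg).sub ((hρ.sub hg).const_mul lam))).1 ?_
    rw [← energy_sub_energy_thomasFermiDensity hρ hEρ hg hEg hmass, heq, sub_self]
  filter_upwards [hdefect_zero] with x hx
  have hsq : (ρ x - g x) ^ 2 = 0 := le_antisymm ((hbound x).trans_eq hx) (sq_nonneg _)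
  exact sub_eq_zero.1 (pow_eq_zero_iff two_ne_zero |>.1 hsq)

lemma integral_thomasFermiDensity_lt {l₁ l₂ : ℝ} (h : l₁ < l₂)
    (h₁ : Integrable (thomasFermiDensity V l₁) μ) (h₂ : Integrable (thomasFermiDensity V l₂) μ)
    (hpos : μ {x | V x < l₂} ≠ 0) :
    ∫ x, thomasFermiDensity V l₁ x ∂μ < ∫ x, thomasFermiDensity V l₂ x ∂μ := by
  rw [← sub_pos, ← integral_sub h₂ h₁, integral_pos_iff_support_of_nonneg
    (fun x => sub_nonneg.2 (thomasFermiDensity_le_of_le V h.le x)) (h₂.sub h₁)]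
  refine (pos_iff_ne_zero.2 hpos).trans_le (measure_mono fun x hx => ?_)
  exact (sub_pos.2 (thomasFermiDensity_lt_of_lt V h hx)).ne'

end Energy

section NormRpow

variable {E : Type*} [NormedAddCommGroup E] {s : ℝ}

lemma continuous_norm_rpow (hs : 0 ≤ s) : Continuous fun x : E => ‖x‖ ^ s :=
  continuous_norm.rpow_const fun _ => Or.inr hs

lemma hasCompactSupport_thomasFermiDensity_norm_rpow [ProperSpace E] (hs : 0 < s) (lam : ℝ) :
    HasCompactSupport (thomasFermiDensity (fun x : E => ‖x‖ ^ s) lam) := by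
  refine HasCompactSupport.intro (isCompact_closedBall 0 (|lam| ^ s⁻¹)) fun x hx => ?_
  rw [mem_closedBall, dist_zero_right, not_le,
    Real.rpow_inv_lt_iff_of_pos (abs_nonneg lam) (norm_nonneg x) hs] at hx
  simp only [thomasFermiDensity, max_eq_right (sub_nonpos.2 ((le_abs_self lam).trans hx.le)),
    mul_zero]

variable [MeasurableSpace E] [OpensMeasurableSpace E] {μ : Measure E}

lemma integrable_thomasFermiDensity_norm_rpow [ProperSpace E] [IsFiniteMeasureOnCompacts μ]
    (hs : 0 < s) (lam : ℝ) : Integrable (thomasFermiDensity (fun x : E => ‖x‖ ^ s) lam) μ :=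
  (continuous_thomasFermiDensity (continuous_norm_rpow hs.le) lam)
    |>.integrable_of_hasCompactSupport (hasCompactSupport_thomasFermiDensity_norm_rpow hs lam)

lemma integrable_energy_thomasFermiDensity_norm_rpow [ProperSpace E]
    [IsFiniteMeasureOnCompacts μ] (hs : 0 < s) (lam : ℝ) :
    Integrable (fun x : E => (‖x‖ ^ s + thomasFermiDensity (fun x : E => ‖x‖ ^ s) lam x) *
      thomasFermiDensity (fun x : E => ‖x‖ ^ s) lam x) μ := by
  have hV : Continuous fun x : E => ‖x‖ ^ s := continuous_norm_rpow hs.le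
  exact ((hV.add (continuous_thomasFermiDensity hV lam)).mul
    (continuous_thomasFermiDensity hV lam)).integrable_of_hasCompactSupport
      (hasCompactSupport_thomasFermiDensity_norm_rpow hs lam).mul_left

lemma integral_thomasFermiDensity_norm_rpow_lt [ProperSpace E] [IsFiniteMeasureOnCompacts μ]
    [μ.IsOpenPosMeasure] (hs : 0 < s) {l₁ l₂ : ℝ} (h : l₁ < l₂) (hl₂ : 0 < l₂) :
    ∫ x, thomasFermiDensity (fun x : E => ‖x‖ ^ s) l₁ x ∂μ <
      ∫ x, thomasFermiDensity (fun x : E => ‖x‖ ^ s) l₂ x ∂μ := by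
  refine integral_thomasFermiDensity_lt h (integrable_thomasFermiDensity_norm_rpow hs l₁)
    (integrable_thomasFermiDensity_norm_rpow hs l₂) (IsOpen.measure_ne_zero μ ?_ ⟨0, ?_⟩)
  · exact isOpen_lt (continuous_norm_rpow hs.le) continuous_const
  · simpa [Real.zero_rpow hs.ne'] using hl₂

end NormRpow

end

theorem stmt_3_general (s : ℝ) (hs : 2 ≤ s) (lam : ℝ)
    (hnorm : (∫ x : EuclideanSpace ℝ (Fin 2), (1 / 2) * max (lam - ‖x‖ ^ s) 0) = 1) :
    (∀ lam' : ℝ, 0 < lam' →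
      (∫ x : EuclideanSpace ℝ (Fin 2), (1 / 2) * max (lam' - ‖x‖ ^ s) 0) = 1 →
      lam' = lam) ∧
    ∀ ρ : EuclideanSpace ℝ (Fin 2) → ℝ,
      Integrable ρ → (∀ x, 0 ≤ ρ x) →
      (∀ x y : EuclideanSpace ℝ (Fin 2), ‖x‖ = ‖y‖ → ρ x = ρ y) →
      (∫ x, ρ x) = 1 →
      Integrable (fun x => (‖x‖ ^ s + ρ x) * ρ x) →
      ((∫ x : EuclideanSpace ℝ (Fin 2),
          (‖x‖ ^ s + (1 / 2) * max (lam - ‖x‖ ^ s) 0) * ((1 / 2) * max (lam - ‖x‖ ^ s) 0))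
        ≤ ∫ x, (‖x‖ ^ s + ρ x) * ρ x) ∧
      ((∫ x, (‖x‖ ^ s + ρ x) * ρ x) =
          (∫ x : EuclideanSpace ℝ (Fin 2),
            (‖x‖ ^ s + (1 / 2) * max (lam - ‖x‖ ^ s) 0) * ((1 / 2) * max (lam - ‖x‖ ^ s) 0)) →
        ρ =ᵐ[(volume : Measure (EuclideanSpace ℝ (Fin 2)))]
          fun x => (1 / 2) * max (lam - ‖x‖ ^ s) 0) := by
  have hs₀ : 0 < s := by linarith
  refine ⟨fun lam' hlam' hnorm' => ?_, fun ρ hρ hρ0 _ hmass hEρ => ?_⟩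
  · rcases lt_trichotomy lam' lam with h | h | h
    · exact absurd (hnorm'.trans hnorm.symm)
        (integral_thomasFermiDensity_norm_rpow_lt hs₀ h (hlam'.trans h)).ne
    · exact h
    · exact absurd (hnorm.trans hnorm'.symm)
        (integral_thomasFermiDensity_norm_rpow_lt hs₀ h hlam').ne
  have hg := integrable_thomasFermiDensity_norm_rpow (E := EuclideanSpace ℝ (Fin 2))
    (μ := volume) hs₀ lam
  have hEg := integrable_energy_thomasFermiDensity_norm_rpow (E := EuclideanSpace ℝ (Fin 2))
    (μ := volume) hs₀ lam
  have hmass' := hmass.trans hnorm.symm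
  exact ⟨energy_thomasFermiDensity_le hρ hρ0 hEρ hg hEg hmass',
    ae_eq_thomasFermiDensity_of_energy_eq hρ hρ0 hEρ hg hEg hmass'⟩

/-- The Thomas–Fermi functional `E[ρ] = ∫ (|x|^s + ρ)ρ` on ℝ², `s ≥ 2`, restricted to
nonnegative integrable radial densities of unit mass, is uniquely minimized by
`ρ^{TF}(x) = (1/2)[λ − |x|^s]_+`, where `λ > 0` is the unique constant giving unit mass. -/
theorem stmt_3 (s : ℝ) (hs : 2 ≤ s) (lam : ℝ) (hlam : 0 < lam)
    (hnorm : (∫ x : EuclideanSpace ℝ (Fin 2), (1 / 2) * max (lam - ‖x‖ ^ s) 0) = 1) :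
    (∀ lam' : ℝ, 0 < lam' →
      (∫ x : EuclideanSpace ℝ (Fin 2), (1 / 2) * max (lam' - ‖x‖ ^ s) 0) = 1 →
      lam' = lam) ∧
    ∀ ρ : EuclideanSpace ℝ (Fin 2) → ℝ,
      Integrable ρ → (∀ x, 0 ≤ ρ x) →
      (∀ x y : EuclideanSpace ℝ (Fin 2), ‖x‖ = ‖y‖ → ρ x = ρ y) →
      (∫ x, ρ x) = 1 →
      Integrable (fun x => (‖x‖ ^ s + ρ x) * ρ x) →
      ((∫ x : EuclideanSpace ℝ (Fin 2),
          (‖x‖ ^ s + (1 / 2) * max (lam - ‖x‖ ^ s) 0) * ((1 / 2) * max (lam - ‖x‖ ^ s) 0))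
        ≤ ∫ x, (‖x‖ ^ s + ρ x) * ρ x) ∧
      ((∫ x, (‖x‖ ^ s + ρ x) * ρ x) =
          (∫ x : EuclideanSpace ℝ (Fin 2),
            (‖x‖ ^ s + (1 / 2) * max (lam - ‖x‖ ^ s) 0) * ((1 / 2) * max (lam - ‖x‖ ^ s) 0)) →
        ρ =ᵐ[(volume : Measure (EuclideanSpace ℝ (Fin 2)))]
          fun x => (1 / 2) * max (lam - ‖x‖ ^ s) 0) :=
  stmt_3_general s hs lam hnorm
end

section
/- Let γ⁰ be an orthogonal projection on a Hilbert space and Q a bounded self-adjoint operator. Then the operator inequality −γ⁰ ≤ Q ≤ 1 − γ⁰ holds if and only if Q^{++} − Q^{−−} ≥ Q², where Q^{++} = (1−γ⁰)Q(1−γ⁰) and Q^{−−} = γ⁰ Q γ⁰. -/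
/-!
Since `γ⁰` is idempotent, `Q^{++} − Q^{−−} − Q² = γ − γ²` for `γ = γ⁰ + Q`, so both sides of the
equivalence say that the self-adjoint operator `γ` satisfies `0 ≤ γ ≤ 1`. By the continuous
functional calculus, `0 ≤ γ ≤ 1` and `γ − γ² ≥ 0` both mean that the spectrum of `γ` lies in
`[0, 1]`.
-/

lemma IsIdempotentElem.add_sub_add_mul_add {R : Type*} [Ring R] {p : R} (hp : IsIdempotentElem p)
    (q : R) : (q + p) - (q + p) * (q + p) = (1 - p) * q * (1 - p) - p * q * p - q * q := by
  have hsq : (q + p) * (q + p) = q * q + q * p + p * q + p := by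
    rw [add_mul, mul_add, mul_add, hp.eq]
    abel
  rw [hsq]
  noncomm_ring

lemma IsSelfAdjoint.nonneg_and_le_one_iff {A : Type*} [Ring A] [StarRing A] [PartialOrder A]
    [StarOrderedRing A] [TopologicalSpace A] [Algebra ℝ A]
    [ContinuousFunctionalCalculus ℝ A IsSelfAdjoint] [NonnegSpectrumClass ℝ A]
    {a : A} (ha : IsSelfAdjoint a) : (0 ≤ a ∧ a ≤ 1) ↔ 0 ≤ a - a * a := by
  have hcfc : a - a * a = cfc (fun x : ℝ => x - x * x) a := by
    rw [cfc_sub _ _ a, cfc_mul _ _ a, cfc_id' ℝ a]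
  rw [StarOrderedRing.nonneg_iff_spectrum_nonneg (R := ℝ) a, CFC.le_one_iff (R := ℝ) a, ← forall₂_and, hcfc,
    cfc_nonneg_iff _ a]
  refine forall₂_congr fun x _ => ⟨fun ⟨h0, h1⟩ => ?_, fun h => ⟨?_, ?_⟩⟩ <;> nlinarith

/-- For an orthogonal projection `P = γ⁰` and a bounded self-adjoint operator `Q`, the
Pauli-principle operator inequality `−γ⁰ ≤ Q ≤ 1 − γ⁰` is equivalent to
`Q^{++} − Q^{−−} ≥ Q²`, where `Q^{++} = (1−γ⁰)Q(1−γ⁰)` and `Q^{−−} = γ⁰Qγ⁰`. -/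
theorem stmt_17 {H : Type*} [NormedAddCommGroup H] [InnerProductSpace ℂ H]
    [CompleteSpace H]
    (P Q : H →L[ℂ] H) (hP : IsSelfAdjoint P) (hProj : P * P = P)
    (hQ : IsSelfAdjoint Q) :
    ((Q + P).IsPositive ∧ ((1 - P) - Q).IsPositive) ↔
      ((((1 - P) * Q * (1 - P)) - (P * Q * P) - Q * Q).IsPositive) := by
  simp only [← ContinuousLinearMap.nonneg_iff_isPositive]
  rw [← IsIdempotentElem.add_sub_add_mul_add hProj, sub_sub, add_comm P Q, sub_nonneg]
  exact (hQ.add hP).nonneg_and_le_one_iff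
end
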